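/- For any nonzero complex number z that is not an integer multiple of πi, the identity 1/sinh(z) = (1/z) · Π_{n=1}^∞ (πn)²/(z² + (πn)²) holds, where the infinite product converges. -/

import Mathlib

/-!
Substituting `x = z i / π` into Euler's product `sin (π x) = π x ∏ (1 - x² / n²)` and using
`sin (z i) = i sinh z` gives `sinh z / z = ∏ (1 + z² / (π n)²)`. Away from `π i ℤ` this value is
nonzero, and inverting a convergent product with nonzero value inverts it factorwise.
-/

open Complex Real

theorem div_add_eq_inv_one_add_div {K : Type*} [DivisionRing K] {a b : K} (ha : a ≠ 0) :
    a / (b + a) = (1 + b / a)⁻¹ := by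
  rw [one_add_div ha, inv_div, add_comm]

theorem Complex.sinh_eq_zero_iff {z : ℂ} : sinh z = 0 ↔ ∃ k : ℤ, z = k * π * I := by
  rw [← mul_left_inj' I_ne_zero, zero_mul, ← sin_mul_I, sin_eq_zero_iff]
  constructor
  · rintro ⟨k, hk⟩
    exact ⟨-k, by push_cast; linear_combination (-I) * hk + z * I_sq⟩
  · rintro ⟨k, rfl⟩
    exact ⟨-k, by push_cast; linear_combination (k * π : ℂ) * I_sq⟩

theorem Complex.hasProd_euler_sinh {z : ℂ} (hz : z ≠ 0) :
    HasProd (fun n : ℕ => 1 + z ^ 2 / ((π : ℂ) * (n + 1)) ^ 2) (sinh z / z) := by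
  have hπ : (π : ℂ) ≠ 0 := ofReal_ne_zero.mpr pi_ne_zero
  have hterm : (fun n : ℕ => 1 + sineTerm (z * I / π) n) =
      fun n : ℕ => 1 + z ^ 2 / ((π : ℂ) * (n + 1)) ^ 2 := by
    ext n
    simp only [sineTerm, div_pow, mul_pow, I_sq]
    field_simp
  have hlim : sin (π * (z * I / π)) / (π * (z * I / π)) = sinh z / z := by
    rw [mul_div_cancel₀ _ hπ, sin_mul_I, mul_div_mul_right _ _ I_ne_zero]
  rw [← hterm, ← hlim, (multipliable_sineTerm _).hasProd_iff_tendsto_nat]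
  exact tendsto_euler_sin_prod' (div_ne_zero (mul_ne_zero hz I_ne_zero) hπ)

theorem sinh_inv_product (z : ℂ) (hz : z ≠ 0)
    (hz' : ∀ n : ℤ, z ≠ (n : ℂ) * (π : ℂ) * I) :
    Multipliable (fun n : ℕ =>
      ((π : ℂ) * (n + 1)) ^ 2 / (z ^ 2 + ((π : ℂ) * (n + 1)) ^ 2)) ∧
    1 / Complex.sinh z =
      (1 / z) * ∏' n : ℕ,
        ((π : ℂ) * (n + 1)) ^ 2 / (z ^ 2 + ((π : ℂ) * (n + 1)) ^ 2) := by
  have hsinh : sinh z ≠ 0 := mt sinh_eq_zero_iff.mp (not_exists.mpr hz')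
  have hprod : HasProd (fun n : ℕ =>
      ((π : ℂ) * (n + 1)) ^ 2 / (z ^ 2 + ((π : ℂ) * (n + 1)) ^ 2)) (z / sinh z) := by
    have hfactor (n : ℕ) : ((π : ℂ) * (n + 1)) ^ 2 ≠ 0 :=
      pow_ne_zero 2 (mul_ne_zero (ofReal_ne_zero.mpr pi_ne_zero) (Nat.cast_add_one_ne_zero n))
    simp_rw [div_add_eq_inv_one_add_div (hfactor _), ← inv_div (sinh z)]
    exact (hasProd_euler_sinh hz).inv₀ (div_ne_zero hsinh hz)
  refine ⟨hprod.multipliable, ?_⟩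
  rw [hprod.tprod_eq]
  field_simp
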